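/- Let 𝒢_n be a simple, verbose ψ-reduction grammar. Then for each production G_n → χ[σ_1]⋯[σ_w] in 𝒢_n whose right-hand side has closure width w, every ground term δ ∈ L(χ[σ_1]⋯[σ_w]) also has closure width w. -/

import Mathlib

mutual
/-- λυ-terms in de Bruijn notation, with explicit closures. -/
inductive LTerm : Type
  | idx : Nat → LTerm
  | lam : LTerm → LTerm
  | app : LTerm → LTerm → LTerm
  | clos : LTerm → LSub → LTerm
  deriving DecidableEq

/-- explicit λυ-substitutions. -/
inductive LSub : Type
  | slash : LTerm → LSub
  | lift : LSub → LSub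
  | shift : LSub
  deriving DecidableEq
end

mutual
/-- natural size of a λυ-term: the number of constructors (|idx n| = n+1). -/
def LTerm.size : LTerm → Nat
  | .idx n => n + 1
  | .lam a => 1 + a.size
  | .app a b => 1 + a.size + b.size
  | .clos a s => 1 + a.size + s.size

/-- natural size of a substitution. -/
def LSub.size : LSub → Nat
  | .slash a => 1 + a.size
  | .lift s => 1 + s.size
  | .shift => 1
end

/-- a λυ-term is pure if it contains no closure; pure terms are exactly the ψ-normal forms. -/
def LTerm.IsPure : LTerm → Prop
  | .idx _ => True
  | .lam a => a.IsPure
  | .app a b => a.IsPure ∧ b.IsPure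
  | .clos _ _ => False

/-- one normal-order (leftmost-outermost) ψ-reduction step. -/
inductive NStep : LTerm → LTerm → Prop
  /-- (App) (ab)[s] → a[s](b[s]) -/
  | appS (a b : LTerm) (s : LSub) :
      NStep (.clos (.app a b) s) (.app (.clos a s) (.clos b s))
  /-- (Lambda) (λa)[s] → λ(a[⇑(s)]) -/
  | lamS (a : LTerm) (s : LSub) :
      NStep (.clos (.lam a) s) (.lam (.clos a (.lift s)))
  /-- (FVar) 0[a/] → a -/
  | fvar (a : LTerm) : NStep (.clos (.idx 0) (.slash a)) a
  /-- (RVar) (S n)[a/] → n -/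
  | rvar (n : Nat) (a : LTerm) : NStep (.clos (.idx (n+1)) (.slash a)) (.idx n)
  /-- (FVarLift) 0[⇑(s)] → 0 -/
  | fvarLift (s : LSub) : NStep (.clos (.idx 0) (.lift s)) (.idx 0)
  /-- (RVarLift) (S n)[⇑(s)] → n[s][↑] -/
  | rvarLift (n : Nat) (s : LSub) :
      NStep (.clos (.idx (n+1)) (.lift s)) (.clos (.clos (.idx n) s) .shift)
  /-- (VarShift) n[↑] → S n -/
  | varShift (n : Nat) : NStep (.clos (.idx n) .shift) (.idx (n+1))
  /-- reduce under an abstraction -/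
  | lamCong {a a' : LTerm} : NStep a a' → NStep (.lam a) (.lam a')
  /-- reduce in the left part of an application -/
  | appLeft {a a' : LTerm} (b : LTerm) : NStep a a' → NStep (.app a b) (.app a' b)
  /-- reduce in the right part of an application, provided the left part is normal -/
  | appRight {b b' : LTerm} (a : LTerm) :
      a.IsPure → NStep b b' → NStep (.app a b) (.app a b')
  /-- reduce in the body of a closure, provided the closure is not itself a ψ-redex,
      i.e. its body is again a closure -/
  | closCong {t t' : LTerm} (s : LSub) :
      (∃ u v, t = LTerm.clos u v) → NStep t t' → NStep (.clos t s) (.clos t' s)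

/-- `NormIn t k` : `t` reaches its ψ-normal form in exactly `k` normal-order
ψ-reduction steps (written t ↓_k). -/
inductive NormIn : LTerm → Nat → Prop
  | base {t : LTerm} : t.IsPure → NormIn t 0
  | step {t t' : LTerm} {k : Nat} : NStep t t' → NormIn t' k → NormIn t (k+1)

/-! ## Regular tree grammars over the λυ signature -/

/-- terms over the ranked alphabet of λυ (terminal symbols 0, S, λ, application,
closure, slash, lift, shift) with variables (non-terminals) in `V`.
Ground terms are `GTerm Empty`. -/
inductive GTerm (V : Type) : Type
  | var : V → GTerm V
  | zero : GTerm V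
  | succ : GTerm V → GTerm V
  | lam : GTerm V → GTerm V
  | app : GTerm V → GTerm V → GTerm V
  | clos : GTerm V → GTerm V → GTerm V
  | slash : GTerm V → GTerm V
  | lift : GTerm V → GTerm V
  | shift : GTerm V
  deriving DecidableEq

/-- `Gen P α t` : the ground term `t` is derivable from the term `α` in the
regular tree grammar with production function `P`. -/
inductive Gen {V : Type} (P : V → Set (GTerm V)) : GTerm V → GTerm Empty → Prop
  | var {X : V} {γ : GTerm V} {t : GTerm Empty} :
      γ ∈ P X → Gen P γ t → Gen P (.var X) t
  | zero : Gen P .zero .zero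
  | succ {a t} : Gen P a t → Gen P (.succ a) (.succ t)
  | lam {a t} : Gen P a t → Gen P (.lam a) (.lam t)
  | app {a b t u} : Gen P a t → Gen P b u → Gen P (.app a b) (.app t u)
  | clos {a b t u} : Gen P a t → Gen P b u → Gen P (.clos a b) (.clos t u)
  | slash {a t} : Gen P a t → Gen P (.slash a) (.slash t)
  | lift {a t} : Gen P a t → Gen P (.lift a) (.lift t)
  | shift : Gen P .shift .shift

/-- the language generated by a term `α` in the grammar with productions `P`. -/
def Lang {V : Type} (P : V → Set (GTerm V)) (α : GTerm V) : Set (GTerm Empty) :=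
  {t | Gen P α t}

/-- derivations (parse trees) of a ground term from a term `α`; a grammar is
unambiguous when such derivations are unique. -/
inductive Parse {V : Type} (P : V → Set (GTerm V)) : GTerm V → GTerm Empty → Type
  | var {X : V} {γ : GTerm V} {t : GTerm Empty} :
      γ ∈ P X → Parse P γ t → Parse P (.var X) t
  | zero : Parse P .zero .zero
  | succ {a t} : Parse P a t → Parse P (.succ a) (.succ t)
  | lam {a t} : Parse P a t → Parse P (.lam a) (.lam t)
  | app {a b t u} : Parse P a t → Parse P b u → Parse P (.app a b) (.app t u)
  | clos {a b t u} : Parse P a t → Parse P b u → Parse P (.clos a b) (.clos t u)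
  | slash {a t} : Parse P a t → Parse P (.slash a) (.slash t)
  | lift {a t} : Parse P a t → Parse P (.lift a) (.lift t)
  | shift : Parse P .shift .shift

/-- a non-terminal `X` is unambiguous if every ground term admits at most one
derivation sequence (equivalently, parse tree) from `X`. -/
def Unambiguous {V : Type} (P : V → Set (GTerm V)) (X : V) : Prop :=
  ∀ t : GTerm Empty, Subsingleton (Parse P (.var X) t)

/-- `Occurs X α` : the non-terminal `X` occurs in the term `α`. -/
def Occurs {V : Type} (X : V) : GTerm V → Prop
  | .var Y => X = Y
  | .zero => False
  | .succ a => Occurs X a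
  | .lam a => Occurs X a
  | .app a b => Occurs X a ∨ Occurs X b
  | .clos a b => Occurs X a ∨ Occurs X b
  | .slash a => Occurs X a
  | .lift a => Occurs X a
  | .shift => False

/-- the head of a term `χ[σ_1]⋯[σ_w]` of closure width `w`, namely `χ`. -/
def headOf {V : Type} : GTerm V → GTerm V
  | .clos a _ => headOf a
  | t => t

/-- the closure width of a term: the largest `w` such that the term has the
form `χ[σ_1]⋯[σ_w]`. -/
def closWidth {V : Type} : GTerm V → Nat
  | .clos a _ => closWidth a + 1
  | _ => 0

/-- a regular tree grammar over the λυ terminal alphabet, with non-terminals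
`V`, axiom `ax` and a finite set of productions for each non-terminal. -/
structure RTG (V : Type) where
  ax : V
  prods : V → Set (GTerm V)
  prods_fin : ∀ X, (prods X).Finite

/-- non-terminal symbols of the ψ-reduction grammar 𝒢_n : the standard
non-terminals T, S, N of the grammar Λ of λυ-terms, plus G_0, …, G_n. -/
inductive NT (n : Nat) : Type
  | T : NT n
  | S : NT n
  | N : NT n
  | G : Fin (n+1) → NT n
  deriving DecidableEq

/-- the productions of the standard regular tree grammar Λ of λυ-terms:
T → N | λT | T T | T[S],  S → T/ | ⇑(S) | ↑,  N → 0 | S N. -/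
def lamProds {n : Nat} : NT n → Set (GTerm (NT n))
  | .T => {GTerm.var (NT.N), GTerm.lam (.var .T), GTerm.app (.var .T) (.var .T),
           GTerm.clos (.var .T) (.var .S)}
  | .S => {GTerm.slash (.var .T), GTerm.lift (.var .S), GTerm.shift}
  | .N => {GTerm.zero, GTerm.succ (.var .N)}
  | .G _ => ∅

/-- encoding of de Bruijn indices as ground terms. -/
def encIdx : Nat → GTerm Empty
  | 0 => .zero
  | n+1 => .succ (encIdx n)

mutual
/-- encoding of λυ-terms as ground terms over the λυ alphabet. -/
def encT : LTerm → GTerm Empty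
  | .idx n => encIdx n
  | .lam a => .lam (encT a)
  | .app a b => .app (encT a) (encT b)
  | .clos a s => .clos (encT a) (encS s)

/-- encoding of λυ-substitutions as ground terms over the λυ alphabet. -/
def encS : LSub → GTerm Empty
  | .slash a => .slash (encT a)
  | .lift s => .lift (encS s)
  | .shift => .shift
end

/-- `IsRG n G` : `G` is a ψ-reduction grammar 𝒢_n : a regular tree grammar
over the λυ alphabet with non-terminals T, S, N, G_0, …, G_n, whose axiom is
G_n, whose productions include those of the grammar Λ of λυ-terms, and such
that each G_k is unambiguous and generates exactly the (encodings of) λυ-terms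
ψ-normalising in k normal-order ψ-reduction steps. -/
structure IsRG (n : Nat) (G : RTG (NT n)) : Prop where
  ax_eq : G.ax = NT.G (Fin.last n)
  lambda_sub : ∀ X : NT n, lamProds X ⊆ G.prods X
  unamb : ∀ k : Fin (n+1), Unambiguous G.prods (NT.G k)
  lang : ∀ k : Fin (n+1),
    Lang G.prods (.var (NT.G k)) = {g | ∃ t : LTerm, NormIn t k ∧ encT t = g}

/-- `IsSimple n G` : the ψ-reduction grammar is simple: every self-referencing
production is a production of Λ or has one of the forms
G_k → λG_k | G_0 G_k | G_k G_0, and every regular (non-self-referencing)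
production G_k → α references only the non-terminals T, S, N, G_0, …, G_{k−1}. -/
structure IsSimple (n : Nat) (G : RTG (NT n)) : Prop where
  selfref : ∀ (X : NT n) (α : GTerm (NT n)), α ∈ G.prods X → Occurs X α →
    α ∈ lamProds X ∨
      ∃ k : Fin (n+1), X = NT.G k ∧
        (α = .lam (.var X) ∨ α = .app (.var (NT.G 0)) (.var X) ∨
          α = .app (.var X) (.var (NT.G 0)))
  regular : ∀ (k : Fin (n+1)) (α : GTerm (NT n)),
    α ∈ G.prods (NT.G k) → ¬ Occurs (NT.G k) α →
      ∀ Y : NT n, Occurs Y α →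
        Y = NT.T ∨ Y = NT.S ∨ Y = NT.N ∨ ∃ j : Fin (n+1), Y = NT.G j ∧ (j : ℕ) < (k : ℕ)

/-- `IsVerbose G` : no production has the form X → G_k[σ_1]⋯[σ_w]. -/
def IsVerbose {n : Nat} (G : RTG (NT n)) : Prop :=
  ∀ (X : NT n) (α : GTerm (NT n)), α ∈ G.prods X →
    ∀ k : Fin (n+1), headOf α ≠ .var (NT.G k)

/-! The head χ of a production `G_n → χ[σ_1]⋯[σ_w]` is not a closure, so a term of
`L(χ[σ_1]⋯[σ_w])` has the form `h[τ_1]⋯[τ_w]` with `h ∈ L(χ)`, and it suffices to show that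
`h` is not a closure. This is clear unless χ is a non-terminal. Verbosity rules out `G_k`.
For the others, recall that every `h'[τ_1]⋯[τ_w]` with `h' ∈ L(χ)` lies in `L(G_n)`, hence
encodes a λυ-term normalising in exactly `n` steps. If χ = T, both `λ0` and `(λ0)[↑]` are in
`L(T)`, but `(λ0)[τ_1]⋯[τ_w]` normalises in `2w` steps and `(λ0)[↑][τ_1]⋯[τ_w]` in `2w + 2`.
If χ = S, then `↑[τ_1]⋯[τ_w]` encodes no term. If χ = N and `h` were a closure, then `S h`
would be in `L(N)`, and `(S h)[τ_1]⋯[τ_w]` encodes no term either. -/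

def LTerm.closList (a : LTerm) : List LSub → LTerm
  | [] => a
  | s :: l => (LTerm.clos a s).closList l

/-- `χ[σ_1]⋯[σ_w]` for the list `[σ_1, …, σ_w]`. -/
def GTerm.closList {V : Type} (χ : GTerm V) : List (GTerm V) → GTerm V
  | [] => χ
  | σ :: l => (GTerm.clos χ σ).closList l

section Reduction

theorem LTerm.closList_append (a : LTerm) (l₁ l₂ : List LSub) :
    a.closList (l₁ ++ l₂) = (a.closList l₁).closList l₂ := by
  induction l₁ generalizing a with
  | nil => rfl
  | cons s l ih => exact ih _

theorem NStep.not_isPure {t t' : LTerm} (h : NStep t t') : ¬ t.IsPure := by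
  induction h <;> simp_all [LTerm.IsPure]

theorem NStep.deterministic {t a b : LTerm} (ha : NStep t a) (hb : NStep t b) : a = b := by
  induction ha generalizing b with
  | lamCong _ ih => cases hb with | lamCong h => rw [ih h]
  | appLeft _ h ih =>
    cases hb with
    | appLeft _ h' => rw [ih h']
    | appRight _ hp _ => exact absurd hp h.not_isPure
  | appRight _ hp _ ih =>
    cases hb with
    | appLeft _ h' => exact absurd hp h'.not_isPure
    | appRight _ _ h' => rw [ih h']
  | closCong _ hex _ ih =>
    obtain ⟨u, v, rfl⟩ := hex
    cases hb with | closCong _ _ h' => rw [ih h']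
  | _ => cases hb <;> simp_all

theorem NormIn.unique {t : LTerm} {j k : ℕ} (hj : NormIn t j) (hk : NormIn t k) : j = k := by
  induction hj generalizing k with
  | base hp =>
    cases hk with
    | base _ => rfl
    | step hs _ => exact absurd hp hs.not_isPure
  | step hs _ ih =>
    cases hk with
    | base hp => exact absurd hp hs.not_isPure
    | step hs' hk' =>
      cases hs.deterministic hs'
      rw [ih hk']

theorem NStep.closList {a b : LTerm} {s : LSub} (h : NStep (.clos a s) b) :
    ∀ l : List LSub, NStep ((LTerm.clos a s).closList l) (b.closList l)
  | [] => h
  | u :: l => (NStep.closCong u ⟨a, s, rfl⟩ h).closList l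

theorem NormIn.lam {a : LTerm} {k : ℕ} (h : NormIn a k) : NormIn (.lam a) k := by
  induction h with
  | base hp => exact .base hp
  | step hs _ ih => exact .step (.lamCong hs) ih

theorem NormIn.closList_lam {a : LTerm} {k : ℕ} :
    ∀ {l : List LSub}, NormIn (a.closList (l.map .lift)) k →
      NormIn ((LTerm.lam a).closList l) (l.length + k)
  | [], h => by simpa [LTerm.closList] using h.lam
  | s :: l, h => by
    rw [List.length_cons, Nat.add_right_comm]
    exact .step ((NStep.lamS a s).closList l) (NormIn.closList_lam h)

theorem normIn_closList_lift_idx_zero :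
    ∀ l : List LSub, NormIn ((LTerm.idx 0).closList (l.map .lift)) l.length
  | [] => .base trivial
  | s :: l => .step ((NStep.fvarLift s).closList _) (normIn_closList_lift_idx_zero l)

theorem normIn_closList_lam_idx_zero (l : List LSub) :
    NormIn ((LTerm.lam (.idx 0)).closList l) (2 * l.length) := by
  rw [two_mul]
  exact NormIn.closList_lam (normIn_closList_lift_idx_zero l)

end Reduction

section Closures

variable {V : Type}

theorem closWidth_closList (χ : GTerm V) (l : List (GTerm V)) :
    closWidth (χ.closList l) = closWidth χ + l.length := by
  induction l generalizing χ with
  | nil => rfl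
  | cons σ l ih => rw [GTerm.closList, ih, closWidth, List.length_cons]; omega

theorem headOf_closList (χ : GTerm V) (l : List (GTerm V)) :
    headOf (χ.closList l) = headOf χ := by
  induction l generalizing χ with
  | nil => rfl
  | cons σ l ih => rw [GTerm.closList, ih, headOf]

theorem GTerm.closList_append (χ : GTerm V) (l₁ l₂ : List (GTerm V)) :
    χ.closList (l₁ ++ l₂) = (χ.closList l₁).closList l₂ := by
  induction l₁ generalizing χ with
  | nil => rfl
  | cons σ l ih => exact ih _

theorem closWidth_headOf (γ : GTerm V) : closWidth (headOf γ) = 0 := by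
  induction γ <;> simp_all [headOf, closWidth]

theorem exists_eq_closList_headOf (γ : GTerm V) :
    ∃ l : List (GTerm V), γ = (headOf γ).closList l ∧ l.length = closWidth γ := by
  induction γ with
  | clos a σ iha _ =>
    obtain ⟨l, hl, hlen⟩ := iha
    refine ⟨l ++ [σ], ?_, by simp [hlen, closWidth]⟩
    rw [headOf, GTerm.closList_append, ← hl]
    rfl
  | _ => exact ⟨[], rfl, rfl⟩

variable {P : V → Set (GTerm V)}

theorem Gen.closList {χ : GTerm V} {h : GTerm Empty} (hχ : Gen P χ h) :
    ∀ {σs : List (GTerm V)} {τs : List (GTerm Empty)}, List.Forall₂ (Gen P) σs τs →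
      Gen P (χ.closList σs) (h.closList τs)
  | _, _, .nil => hχ
  | _, _, .cons hσ hl => (Gen.clos hχ hσ).closList hl

theorem Gen.exists_of_closList :
    ∀ {σs : List (GTerm V)} {χ : GTerm V} {δ : GTerm Empty}, Gen P (χ.closList σs) δ →
      ∃ (h : GTerm Empty) (τs : List (GTerm Empty)),
        δ = h.closList τs ∧ Gen P χ h ∧ List.Forall₂ (Gen P) σs τs
  | [], _, δ, hδ => ⟨δ, [], rfl, hδ, .nil⟩
  | σ :: σs, χ, _, hδ => by
    obtain ⟨_, τs, rfl, hχσ, hl⟩ := Gen.exists_of_closList (σs := σs) (χ := .clos χ σ) hδ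
    cases hχσ with | clos hχ hσ => exact ⟨_, _ :: τs, rfl, hχ, .cons hσ hl⟩

theorem Gen.closWidth_eq_zero {χ : GTerm V} {h : GTerm Empty} (hg : Gen P χ h)
    (hχ : closWidth χ = 0) (hvar : ∀ X, χ ≠ .var X) : closWidth h = 0 := by
  cases hg <;> simp_all [closWidth]

end Closures

section Encoding

theorem encT_clos (a : LTerm) (s : LSub) : encT (.clos a s) = .clos (encT a) (encS s) := by
  rw [encT]

theorem exists_of_encT_eq_closList {h : GTerm Empty} :
    ∀ {τs : List (GTerm Empty)} {t : LTerm}, encT t = h.closList τs →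
      ∃ (a : LTerm) (l : List LSub), t = a.closList l ∧ encT a = h ∧ τs = l.map encS := by
  intro τs
  induction τs using List.reverseRecOn with
  | nil => exact fun ht => ⟨_, [], rfl, ht, rfl⟩
  | append_singleton τs τ ih =>
    intro t ht
    rw [GTerm.closList_append, GTerm.closList, GTerm.closList] at ht
    cases t with
    | clos a s =>
      rw [encT_clos] at ht
      obtain ⟨ha, rfl⟩ := GTerm.clos.inj ht
      obtain ⟨b, l, rfl, hb, rfl⟩ := ih ha
      exact ⟨b, l ++ [s], by rw [LTerm.closList_append]; rfl, hb, by simp⟩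
    | idx m => cases m <;> simp [encT, encIdx] at ht
    | _ => simp [encT] at ht

theorem encT_eq_lam_zero {t : LTerm} (h : encT t = .lam .zero) : t = .lam (.idx 0) := by
  rcases t with (_ | _) | ((_ | _ | _ | _) | _ | _ | _) | _ | _ <;> simp_all [encT, encIdx]

theorem headOf_encT_ne_shift : ∀ t : LTerm, headOf (encT t) ≠ .shift
  | .idx m => by cases m <;> simp [encT, encIdx, headOf]
  | .lam _ | .app _ _ => by simp [encT, headOf]
  | .clos a _ => by rw [encT_clos, headOf]; exact headOf_encT_ne_shift a

theorem headOf_encT_ne_succ_clos (a b : GTerm Empty) :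
    ∀ t : LTerm, headOf (encT t) ≠ .succ (.clos a b)
  | .idx m => by rcases m with _ | _ | _ <;> simp [encT, encIdx, headOf]
  | .lam _ | .app _ _ => by simp [encT, headOf]
  | .clos t _ => by rw [encT_clos, headOf]; exact headOf_encT_ne_succ_clos a b t

theorem normIn_of_encT_eq_closList_lam_zero {t : LTerm} {τs : List (GTerm Empty)}
    (ht : encT t = (GTerm.lam .zero).closList τs) : NormIn t (2 * τs.length) := by
  obtain ⟨a, l, rfl, ha, rfl⟩ := exists_of_encT_eq_closList ht
  rw [encT_eq_lam_zero ha, List.length_map]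
  exact normIn_closList_lam_idx_zero l

end Encoding

section PsiGrammar

variable {n : ℕ} {P : NT n → Set (GTerm (NT n))}

theorem gen_N_encIdx (hΛ : ∀ X, lamProds X ⊆ P X) : ∀ m : ℕ, Gen P (.var .N) (encIdx m)
  | 0 => .var (hΛ .N (by simp [lamProds])) .zero
  | m + 1 => .var (hΛ .N (by simp [lamProds])) (.succ (gen_N_encIdx hΛ m))

mutual

theorem gen_T_encT (hΛ : ∀ X, lamProds X ⊆ P X) : ∀ t : LTerm, Gen P (.var .T) (encT t)
  | .idx m => by rw [encT]; exact .var (hΛ .T (by simp [lamProds])) (gen_N_encIdx hΛ m)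
  | .lam a => by rw [encT]; exact .var (hΛ .T (by simp [lamProds])) (.lam (gen_T_encT hΛ a))
  | .app a b => by
    rw [encT]; exact .var (hΛ .T (by simp [lamProds])) (.app (gen_T_encT hΛ a) (gen_T_encT hΛ b))
  | .clos a s => by
    rw [encT]; exact .var (hΛ .T (by simp [lamProds])) (.clos (gen_T_encT hΛ a) (gen_S_encS hΛ s))

theorem gen_S_encS (hΛ : ∀ X, lamProds X ⊆ P X) : ∀ s : LSub, Gen P (.var .S) (encS s)
  | .slash a => by rw [encS]; exact .var (hΛ .S (by simp [lamProds])) (.slash (gen_T_encT hΛ a))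
  | .lift s => by rw [encS]; exact .var (hΛ .S (by simp [lamProds])) (.lift (gen_S_encS hΛ s))
  | .shift => by rw [encS]; exact .var (hΛ .S (by simp [lamProds])) .shift

end

theorem closWidth_eq_zero_of_gen_var (hΛ : ∀ X, lamProds X ⊆ P X) {X : NT n}
    (hX : ∀ k, X ≠ .G k) {τs : List (GTerm Empty)} {m : ℕ}
    (hnorm : ∀ h', Gen P (.var X) h' → ∃ t, NormIn t m ∧ encT t = h'.closList τs)
    {h : GTerm Empty} (hh : Gen P (.var X) h) : closWidth h = 0 := by
  have hhead {h'} (hh' : Gen P (.var X) h') : ∃ t, headOf (encT t) = headOf h' := by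
    obtain ⟨t, -, ht⟩ := hnorm h' hh'
    exact ⟨t, by rw [ht, headOf_closList]⟩
  cases X with
  | G k => exact absurd rfl (hX k)
  | T =>
    obtain ⟨t₁, ht₁, he₁⟩ := hnorm _ (gen_T_encT hΛ (.lam (.idx 0)))
    obtain ⟨t₂, ht₂, he₂⟩ := hnorm _ (gen_T_encT hΛ (.clos (.lam (.idx 0)) .shift))
    have h₁ := (normIn_of_encT_eq_closList_lam_zero he₁).unique ht₁
    have h₂ := (normIn_of_encT_eq_closList_lam_zero (τs := .shift :: τs) he₂).unique ht₂
    simp only [List.length_cons] at h₂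
    omega
  | S =>
    obtain ⟨t, ht⟩ := hhead (gen_S_encS hΛ .shift)
    exact absurd ht (headOf_encT_ne_shift t)
  | N =>
    cases h with
    | clos β τ =>
      obtain ⟨t, ht⟩ := hhead (.var (hΛ .N (by simp [lamProds])) (.succ hh))
      exact absurd ht (headOf_encT_ne_succ_clos β τ t)
    | _ => rfl

end PsiGrammar

/-- Let 𝒢_n be a simple, verbose ψ-reduction grammar. Then for each production
G_n → χ[σ_1]⋯[σ_w] whose right-hand side has closure width w, every ground
term δ ∈ L(χ[σ_1]⋯[σ_w]) also has closure width w. -/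
theorem productions_preserve_closure_width (n : Nat) (G : RTG (NT n))
    (hRG : IsRG n G) (hSimple : IsSimple n G) (hVerbose : IsVerbose G)
    (γ : GTerm (NT n)) (hγ : γ ∈ G.prods (NT.G (Fin.last n)))
    (δ : GTerm Empty) (hδ : δ ∈ Lang G.prods γ) :
    closWidth δ = closWidth γ := by
  obtain ⟨σs, hγσ, hσs⟩ := exists_eq_closList_headOf γ
  obtain ⟨h, τs, rfl, hh, hστ⟩ :=
    Gen.exists_of_closList (show Gen G.prods ((headOf γ).closList σs) δ from hγσ ▸ hδ)
  have hnorm (h' : GTerm Empty) (hh' : Gen G.prods (headOf γ) h') :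
      ∃ t, NormIn t n ∧ encT t = h'.closList τs := by
    have hG : h'.closList τs ∈ Lang G.prods (.var (NT.G (Fin.last n))) :=
      Gen.var hγ (hγσ ▸ hh'.closList hστ)
    rw [hRG.lang] at hG
    simpa using hG
  suffices closWidth h = 0 by
    rw [closWidth_closList, this, ← hσs, hστ.length_eq]
    omega
  by_cases hvar : ∃ X, headOf γ = .var X
  · obtain ⟨X, hX⟩ := hvar
    rw [hX] at hh hnorm
    exact closWidth_eq_zero_of_gen_var hRG.lambda_sub
      (fun k hk => hVerbose _ γ hγ k (hk ▸ hX)) hnorm hh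
  · exact hh.closWidth_eq_zero (closWidth_headOf γ) (not_exists.mp hvar)
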